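/- Let G be a finite group and H ≤ G a subgroup with normalizer N = N_G(H). Let X be an N-set on which H acts trivially. Then the H-fixed points of the induced G-set G ×_N X are in natural bijection with X. -/

import Mathlib

/-- The relation on `G × X` generating the induced `G`-set `G ×_N X`:
`(g * n, x)` is identified with `(g, n • x)` for `n ∈ N`. -/
def InducedRel (G : Type*) [Group G] (N : Subgroup G) (X : Type*) [MulAction N X] :
    (G × X) → (G × X) → Prop :=
  fun a b => ∃ n : N, a.1 = b.1 * n ∧ b.2 = n • a.2

/-- The induced `G`-set `G ×_N X`. -/
def InducedSet (G : Type*) [Group G] (N : Subgroup G) (X : Type*) [MulAction N X] : Type _ :=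
  Quot (InducedRel G N X)

/-- The `G`-action on `G ×_N X`, by left multiplication on the first factor. -/
def inducedSmul (G : Type*) [Group G] (N : Subgroup G) (X : Type*) [MulAction N X]
    (g : G) : InducedSet G N X → InducedSet G N X :=
  Quot.map (fun p => (g * p.1, p.2)) (by
    rintro a b ⟨n, h1, h2⟩
    exact ⟨n, by show g * a.1 = g * b.1 * (n : G); rw [h1, mul_assoc], h2⟩)

section InducedSet

variable {G : Type*} [Group G] {N : Subgroup G} {X : Type*} [MulAction N X]

theorem inducedRel_equivalence : Equivalence (InducedRel G N X) where
  refl _ := ⟨1, by simp, by simp⟩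
  symm := by
    rintro a b ⟨n, h1, h2⟩
    exact ⟨n⁻¹, by simp [h1], by rw [h2, inv_smul_smul]⟩
  trans := by
    rintro a b c ⟨n, h1, h2⟩ ⟨m, h3, h4⟩
    exact ⟨m * n, by rw [h1, h3, Subgroup.coe_mul, mul_assoc], by rw [h4, h2, mul_smul]⟩

theorem inducedSet_mk_eq_mk_iff {a b : G × X} :
    (Quot.mk _ a : InducedSet G N X) = Quot.mk _ b ↔ InducedRel G N X a b :=
  ⟨fun h => inducedRel_equivalence.eqvGen_iff.mp (Quot.eqvGen_exact h), Quot.sound⟩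

theorem inducedSet_mk_one_injective :
    Function.Injective fun x : X => (Quot.mk _ (1, x) : InducedSet G N X) := by
  intro x y hxy
  obtain ⟨n, hn, rfl⟩ := inducedSet_mk_eq_mk_iff.mp hxy
  obtain rfl : n = 1 := Subtype.ext (by simpa using hn.symm)
  exact (one_smul _ _).symm

theorem inducedSet_mk_of_mem (x : X) {g : G} (hg : g ∈ N) :
    (Quot.mk _ (g, x) : InducedSet G N X) = Quot.mk _ (1, (⟨g, hg⟩ : N) • x) :=
  Quot.sound ⟨⟨g, hg⟩, by simp, rfl⟩

theorem inducedSmul_mk_eq_self_iff (h g : G) (x : X) :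
    inducedSmul G N X h (Quot.mk _ (g, x)) = Quot.mk _ (g, x) ↔
      ∃ n : N, (n : G) = g⁻¹ * h * g ∧ n • x = x := by
  refine inducedSet_mk_eq_mk_iff.trans ⟨?_, ?_⟩
  · rintro ⟨n, hn : h * g = g * n, hx : x = n • x⟩
    exact ⟨n, by rw [mul_assoc, hn, inv_mul_cancel_left], hx.symm⟩
  · rintro ⟨n, hn, hx⟩
    exact ⟨n, show h * g = g * n by rw [hn, ← mul_assoc, mul_inv_cancel_left], hx.symm⟩

end InducedSet

/-- Let `G` be a finite group, `H ≤ G`, `N = N_G(H)` its normalizer, and `X` an `N`-set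
on which `H` acts trivially and `N/H` acts freely.  Then the map `X → (G ×_N X)^H`,
`x ↦ [e, x]`, is a bijection onto the `H`-fixed points of the induced `G`-set. -/
theorem inducedSet_fixedPoints_equiv (G : Type*) [Group G] [Finite G] (H : Subgroup G)
    (X : Type*) [MulAction (Subgroup.normalizer (H : Set G)) X]
    (htriv : ∀ n : Subgroup.normalizer (H : Set G), (n : G) ∈ H → ∀ x : X, n • x = x)
    (hfree : ∀ (n : Subgroup.normalizer (H : Set G)) (x : X), n • x = x → (n : G) ∈ H) :
    ∃ e : X ≃ {q : InducedSet G (Subgroup.normalizer (H : Set G)) X //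
        ∀ h : G, h ∈ H → inducedSmul G (Subgroup.normalizer (H : Set G)) X h q = q},
      ∀ x : X, (e x : InducedSet G (Subgroup.normalizer (H : Set G)) X) = Quot.mk _ (1, x) := by
  have fixed (x : X) (h : G) (hh : h ∈ H) :
      inducedSmul G _ X h (Quot.mk _ (1, x)) = Quot.mk _ (1, x) :=
    (inducedSmul_mk_eq_self_iff h 1 x).mpr
      ⟨⟨h, H.le_normalizer hh⟩, by simp, htriv ⟨h, H.le_normalizer hh⟩ hh x⟩
  refine ⟨Equiv.ofBijective (fun x => ⟨Quot.mk _ (1, x), fixed x⟩) ⟨?_, ?_⟩, fun _ => rfl⟩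
  · exact fun x y hxy => inducedSet_mk_one_injective (congrArg Subtype.val hxy)
  · rintro ⟨q, hq⟩
    obtain ⟨⟨g, x⟩, rfl⟩ := q.exists_rep
    -- Fixedness and freeness give `g⁻¹ H g ⊆ H`, which for finite `H` means `g ∈ N_G(H)`.
    have hconj (h : G) (hh : h ∈ H) : g⁻¹ * h * g⁻¹⁻¹ ∈ H := by
      obtain ⟨n, hn, hx⟩ := (inducedSmul_mk_eq_self_iff h g x).mp (hq h hh)
      simpa [← hn] using hfree n x hx
    have hg : g ∈ Subgroup.normalizer (H : Set G) :=
      inv_inv g ▸ inv_mem (Subgroup.mem_normalizer_fintype hconj)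
    exact ⟨_, Subtype.ext (inducedSet_mk_of_mem x hg).symm⟩
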